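/- arXiv:1906.10357 — 6 statements merged into one kernel-verified Lean document; each statement's English description precedes it below -/
import Mathlib

section
/- Let A(X,Y) and B(Y,Z) be propositional formulas with A ∧ B unsatisfiable (equivalently A ⇒ ¬B where ¬B is viewed over Y,Z). Let W = X ∪ Z and let A*(Y) satisfy ∃W.(A ∧ B) ≡ A* ∧ ∃W.B together with A ⇒ A*. Then A ⇒ A* ⇒ ¬B, i.e., A* is an interpolant for (A, ¬B). -/
abbrev Var := ℕ
abbrev Assn := Var → Bool
abbrev Lit := Var × Bool
abbrev Clause := Set Lit
abbrev CNF := Set Clause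

/-- An assignment satisfies a clause iff it makes some literal true. -/
def clauseSat (a : Assn) (C : Clause) : Prop := ∃ l ∈ C, a l.1 = l.2
/-- An assignment satisfies a CNF formula iff it satisfies every clause. -/
def cnfSat (a : Assn) (F : CNF) : Prop := ∀ C ∈ F, clauseSat a C
/-- `a ⊨ ∃X.F`: some assignment agreeing with `a` outside `X` satisfies `F`. -/
def exSat (X : Set Var) (F : CNF) (a : Assn) : Prop :=
  ∃ a' : Assn, (∀ v ∉ X, a' v = a v) ∧ cnfSat a' F
/-- Logical equivalence of `∃X.F` and `∃X.G`. -/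
def equivQ (X : Set Var) (F G : CNF) : Prop := ∀ a : Assn, exSat X F a ↔ exSat X G a

/-- A partial assignment. -/
abbrev PAssn := Var → Option Bool
/-- Clause `C` is satisfied by partial assignment `q`. -/
def satByQ (q : PAssn) (C : Clause) : Prop := ∃ l ∈ C, q l.1 = some l.2
/-- Restriction of a (non-satisfied) clause under `q`: falsified literals removed. -/
def resC (q : PAssn) (C : Clause) : Clause := {l ∈ C | q l.1 = none}
/-- Restriction `F|_q` of a CNF formula: satisfied clauses removed, remaining clauses restricted. -/
def resF (q : PAssn) (F : CNF) : CNF := {D | ∃ C ∈ F, ¬ satByQ q C ∧ D = resC q C}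
/-- The D-sequent `(∃X.F, q, H) → C` holds: for every member formula `W` with
`H ∪ {C} ⊆ W ⊆ F` whose restriction is logically equivalent (under `∃X`) to `F|_q`,
the clause `C|_q` is redundant in `∃X.(W|_q)`. -/
def DseqHolds (X : Set Var) (F : CNF) (q : PAssn) (H : Set Clause) (C : Clause) : Prop :=
  ∀ W : CNF, H ∪ {C} ⊆ W → W ⊆ F → equivQ X (resF q W) (resF q F) →
    equivQ X (resF q W) (resF q (W \ {C}))

/-- `P` depends only on the variables in `V`. -/
def depOnly (P : Assn → Prop) (V : Set Var) : Prop :=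
  ∀ a a' : Assn, (∀ v ∈ V, a v = a' v) → (P a ↔ P a')
/-- `a ⊨ ∃X.P` for a general propositional predicate `P`. -/
def exSatP (X : Set Var) (P : Assn → Prop) (a : Assn) : Prop :=
  ∃ a' : Assn, (∀ v ∉ X, a' v = a v) ∧ P a'

theorem exSatP_of_sat {P : Assn → Prop} {a : Assn} (X : Set Var) (h : P a) : exSatP X P a :=
  ⟨a, fun _ _ => rfl, h⟩

theorem not_exSatP_of_unsat {P : Assn → Prop} (X : Set Var) (h : ∀ a, ¬ P a) (a : Assn) :
    ¬ exSatP X P a :=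
  fun ⟨a', _, ha'⟩ => h a' ha'

theorem stmt2_general (X Z : Set Var) (A B Astar : Assn → Prop)
    (hUnsat : ∀ a, ¬ (A a ∧ B a))
    (hpqe : ∀ a, exSatP (X ∪ Z) (fun a' => A a' ∧ B a') a ↔
        (Astar a ∧ exSatP (X ∪ Z) B a))
    (himp : ∀ a, A a → Astar a) :
    (∀ a, A a → Astar a) ∧ (∀ a, Astar a → ¬ B a) :=
  ⟨himp, fun a hAstar hB =>
    not_exSatP_of_unsat (X ∪ Z) hUnsat a ((hpqe a).mpr ⟨hAstar, exSatP_of_sat (X ∪ Z) hB⟩)⟩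

/-- Interpolation as a special case of PQE: if `A ∧ B` is unsatisfiable,
`∃W.(A ∧ B) ≡ A* ∧ ∃W.B` with `W = X ∪ Z`, and `A ⇒ A*`, then `A ⇒ A* ⇒ ¬B`,
i.e. `A*` is an interpolant for `(A, ¬B)`. -/
theorem stmt2 (X Y Z : Set Var) (A B Astar : Assn → Prop)
    (hXY : Disjoint X Y) (hXZ : Disjoint X Z) (hYZ : Disjoint Y Z)
    (hA : depOnly A (X ∪ Y)) (hB : depOnly B (Y ∪ Z)) (hAs : depOnly Astar Y)
    (hUnsat : ∀ a, ¬ (A a ∧ B a))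
    (hpqe : ∀ a, exSatP (X ∪ Z) (fun a' => A a' ∧ B a') a ↔
        (Astar a ∧ exSatP (X ∪ Z) B a))
    (himp : ∀ a, A a → Astar a) :
    (∀ a, A a → Astar a) ∧ (∀ a, Astar a → ¬ B a) :=
  stmt2_general X Z A B Astar hUnsat hpqe himp
end

section
/- Let F be a CNF formula, X a subset of its variables, C an X-clause of F, and v a variable of C with v ∈ X. If C is blocked at v in F (no clause of F \ {C} is resolvable with C on v), then C is redundant in ∃X.F, i.e., ∃X.F ≡ ∃X.(F \ {C}). -/
/-- Clauses `C'`, `C''` are resolvable on `v`: they have opposite literals of `v`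
and of no other variable. -/
def resolvable (C' C'' : Clause) (v : Var) : Prop :=
  (∃ b, (v, b) ∈ C' ∧ (v, !b) ∈ C'') ∧ ∀ w b, w ≠ v → (w, b) ∈ C' → (w, !b) ∉ C''

/-!
If an assignment satisfies `F \ {C}` but falsifies `C`, set `v` to the value of its literal
in `C`. This satisfies `C`, and it keeps every other clause `D` satisfied: if `D` was only
satisfied through the literal of `v` opposite to the one in `C`, then, since `C` and `D` are
not resolvable on `v`, they clash on a second variable `w`, and the literal of `w` in `D` is
true because the one in `C` is false. As `v ∈ X`, the flip is invisible in `∃X`.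
-/

theorem cnfSat_mono {a : Assn} {F G : CNF} (hGF : G ⊆ F) (h : cnfSat a F) : cnfSat a G :=
  fun D hD => h D (hGF hD)

theorem cnfSat_of_cnfSat_diff_singleton {a : Assn} {F : CNF} {C : Clause} (hCa : clauseSat a C)
    (h : cnfSat a (F \ {C})) : cnfSat a F := by
  intro D hD
  by_cases hDC : D = C
  · exact hDC ▸ hCa
  · exact h D ⟨hD, hDC⟩

theorem exSat_mono {X : Set Var} {F G : CNF} {a : Assn} (hGF : G ⊆ F) (h : exSat X F a) :
    exSat X G a :=
  let ⟨a', ha', hsat⟩ := h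
  ⟨a', ha', cnfSat_mono hGF hsat⟩

theorem eq_not_of_not_clauseSat {a : Assn} {C : Clause} {w : Var} {c : Bool}
    (hC : ¬ clauseSat a C) (hw : (w, c) ∈ C) : a w = !c := by
  have : a w ≠ c := fun h => hC ⟨(w, c), hw, h⟩
  cases c <;> simpa using this

theorem clauseSat_update_of_mem (a : Assn) {C : Clause} {v : Var} {b : Bool} (hv : (v, b) ∈ C) :
    clauseSat (Function.update a v b) C :=
  ⟨(v, b), hv, Function.update_self v b a⟩

theorem clauseSat_update_of_not_resolvable {a : Assn} {C D : Clause} {v : Var} {b : Bool}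
    (hCa : ¬ clauseSat a C) (hv : (v, b) ∈ C) (hres : ¬ resolvable C D v)
    (hDa : clauseSat a D) : clauseSat (Function.update a v b) D := by
  obtain ⟨⟨w, c⟩, hwD, hwa⟩ := hDa
  by_cases hwv : w = v
  · subst hwv
    have hc : c = !b := hwa.symm.trans (eq_not_of_not_clauseSat hCa hv)
    subst hc
    have hclash : ∃ u c', u ≠ w ∧ (u, c') ∈ C ∧ (u, !c') ∈ D := by
      by_contra! h
      exact hres ⟨⟨b, hv, hwD⟩, h⟩
    obtain ⟨u, c', huw, huC, huD⟩ := hclash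
    exact ⟨(u, !c'), huD, by
      simpa [Function.update_of_ne huw] using eq_not_of_not_clauseSat hCa huC⟩
  · exact ⟨(w, c), hwD, by simpa [Function.update_of_ne hwv] using hwa⟩

theorem cnfSat_update_of_blocked {a : Assn} {F : CNF} {C : Clause} {v : Var} {b : Bool}
    (hv : (v, b) ∈ C) (hblocked : ∀ B ∈ F \ {C}, ¬ resolvable C B v)
    (hCa : ¬ clauseSat a C) (hFa : cnfSat a (F \ {C})) : cnfSat (Function.update a v b) F :=
  cnfSat_of_cnfSat_diff_singleton (clauseSat_update_of_mem a hv) fun D hD =>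
    clauseSat_update_of_not_resolvable hCa hv (hblocked D hD) (hFa D hD)

theorem stmt3_general (X : Set Var) (F : CNF) (C : Clause) (v : Var) (b : Bool)
    (hv : (v, b) ∈ C) (hvX : v ∈ X)
    (hblocked : ∀ B ∈ F \ {C}, ¬ resolvable C B v) :
    equivQ X F (F \ {C}) := by
  refine fun a => ⟨exSat_mono Set.sdiff_subset, ?_⟩
  rintro ⟨a', ha', hsat⟩
  by_cases hCa : clauseSat a' C
  · exact ⟨a', ha', cnfSat_of_cnfSat_diff_singleton hCa hsat⟩
  · refine ⟨Function.update a' v b, fun w hw => ?_, cnfSat_update_of_blocked hv hblocked hCa hsat⟩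
    rw [Function.update_of_ne (ne_of_mem_of_not_mem hvX hw).symm]
    exact ha' w hw

/-- A clause blocked at a quantified variable is redundant in `∃X.F`. -/
theorem stmt3 (X : Set Var) (F : CNF) (C : Clause) (v : Var) (b : Bool)
    (hC : C ∈ F) (hv : (v, b) ∈ C) (hvX : v ∈ X)
    (hblocked : ∀ B ∈ F \ {C}, ¬ resolvable C B v) :
    equivQ X F (F \ {C}) :=
  stmt3_general X F C v b hv hvX hblocked
end

section
/- Atomic D-sequents of the second kind are correct: let F be a CNF formula with quantified variables X, q an assignment to the variables of F, C an X-clause of F and B ∈ F with B ≠ C. Suppose C|_q is still an X-clause and B|_q implies C|_q (every literal of B|_q is a literal of C|_q). Then the D-sequent (∃X.F, q, {B}) → C holds: for every W with {B, C} ⊆ W ⊆ F, the clause C|_q is redundant in ∃X.(W|_q). -/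
theorem clauseSat.mono {a : Assn} {B C : Clause} (hBC : B ⊆ C) (hB : clauseSat a B) :
    clauseSat a C :=
  let ⟨l, hl, hal⟩ := hB
  ⟨l, hBC hl, hal⟩

theorem cnfSat.mono {a : Assn} {F G : CNF} (hGF : G ⊆ F) (hF : cnfSat a F) : cnfSat a G :=
  fun D hD => hF D (hGF hD)

theorem cnfSat_insert_of_subsumed {a : Assn} {G : CNF} {B C : Clause} (hB : B ∈ G)
    (hBC : B ⊆ C) (hG : cnfSat a G) : cnfSat a (insert C G) := by
  rintro D (rfl | hD)
  · exact (hG B hB).mono hBC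
  · exact hG D hD

theorem equivQ_of_subsumed {X : Set Var} {F G : CNF} {B C : Clause} (hGF : G ⊆ F)
    (hFG : F ⊆ insert C G) (hB : B ∈ G) (hBC : B ⊆ C) : equivQ X F G := fun _ =>
  ⟨fun ⟨a', ha', hF⟩ => ⟨a', ha', hF.mono hGF⟩,
   fun ⟨a', ha', hG⟩ => ⟨a', ha', (cnfSat_insert_of_subsumed hB hBC hG).mono hFG⟩⟩

theorem resF_mono (q : PAssn) {F G : CNF} (hGF : G ⊆ F) : resF q G ⊆ resF q F :=
  fun _ ⟨D, hD, hsat, hres⟩ => ⟨D, hGF hD, hsat, hres⟩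

theorem resC_mem_resF {q : PAssn} {F : CNF} {C : Clause} (hC : C ∈ F) (hsat : ¬ satByQ q C) :
    resC q C ∈ resF q F :=
  ⟨C, hC, hsat, rfl⟩

theorem resF_subset_insert_resF_diff (q : PAssn) (F : CNF) (C : Clause) :
    resF q F ⊆ insert (resC q C) (resF q (F \ {C})) := by
  rintro _ ⟨D, hD, hsat, rfl⟩
  by_cases hDC : D = C
  · exact .inl (hDC ▸ rfl)
  · exact .inr (resC_mem_resF ⟨hD, hDC⟩ hsat)

theorem stmt6_general (X : Set Var) (F : CNF) (q : PAssn) (C B : Clause)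
    (hne : B ≠ C)
    (himp : ¬ satByQ q B ∧ resC q B ⊆ resC q C) :
    DseqHolds X F q {B} C := by
  intro W hW _ _
  have hBW : B ∈ W \ {C} := ⟨hW (.inl rfl), hne⟩
  exact equivQ_of_subsumed (resF_mono q Set.sdiff_subset) (resF_subset_insert_resF_diff q W C)
    (resC_mem_resF hBW himp.1) himp.2

/-- Atomic D-sequents of the second kind are correct: if `C|_q` is still an `X`-clause
and `B|_q` implies (subsumes) `C|_q`, then the D-sequent `(∃X.F, q, {B}) → C` holds. -/
theorem stmt6 (X : Set Var) (F : CNF) (q : PAssn) (C B : Clause)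
    (hC : C ∈ F) (hB : B ∈ F) (hne : B ≠ C)
    (hXcl : ∃ l ∈ C, l.1 ∈ X)
    (hXres : ¬ satByQ q C ∧ ∃ l ∈ resC q C, l.1 ∈ X)
    (himp : ¬ satByQ q B ∧ resC q B ⊆ resC q C) :
    DseqHolds X F q {B} C :=
  stmt6_general X F q C B hne himp
end

section
/- Solution criterion for PQE via redundancy: let F₁(X,Y) and F₂(X,Y) be CNF formulas where every clause of F₁ contains at least one variable of X, and let F₁*(Y) be a CNF formula over Y implied by F₁ ∧ F₂. If every clause of F₁ is redundant in ∃X.(F₁* ∧ F₁ ∧ F₂), i.e., ∃X.(F₁* ∧ F₁ ∧ F₂) ≡ ∃X.(F₁* ∧ F₂), then F₁* is a solution of the PQE problem: F₁* ∧ ∃X.F₂ ≡ ∃X.(F₁ ∧ F₂). -/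
/-! Since `F₁*` mentions no variable of `X`, `F₁* ∧ ∃X.F₂ ≡ ∃X.(F₁* ∧ F₂)`; by the
redundancy of `F₁` this is `∃X.(F₁* ∧ F₁ ∧ F₂)`, and since `F₁ ∧ F₂` implies `F₁*`,
dropping `F₁*` leaves `∃X.(F₁ ∧ F₂)`. -/

theorem cnfSat_union {a : Assn} {F G : CNF} : cnfSat a (F ∪ G) ↔ cnfSat a F ∧ cnfSat a G := by
  simp only [cnfSat, Set.mem_union, or_imp, forall_and]

theorem cnfSat_congr {a b : Assn} {F : CNF} (hab : ∀ C ∈ F, ∀ l ∈ C, a l.1 = b l.1) :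
    cnfSat a F ↔ cnfSat b F := by
  unfold cnfSat clauseSat
  exact forall₂_congr fun C hC => exists_congr fun l =>
    and_congr_right fun hl => by rw [hab C hC l hl]

theorem exSat_union_of_forall_notMem {X : Set Var} {F G : CNF} {a : Assn}
    (hF : ∀ C ∈ F, ∀ l ∈ C, l.1 ∉ X) : exSat X (F ∪ G) a ↔ cnfSat a F ∧ exSat X G a := by
  have hFa : ∀ a' : Assn, (∀ v ∉ X, a' v = a v) → (cnfSat a' F ↔ cnfSat a F) :=
    fun a' ha' => cnfSat_congr fun C hC l hl => ha' l.1 (hF C hC l hl)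
  simp only [exSat, cnfSat_union]
  constructor
  · rintro ⟨a', ha', hF', hG'⟩
    exact ⟨(hFa a' ha').1 hF', a', ha', hG'⟩
  · rintro ⟨hFa', a', ha', hG'⟩
    exact ⟨a', ha', (hFa a' ha').2 hFa', hG'⟩

theorem exSat_union_of_imp {X : Set Var} {F G : CNF} {a : Assn}
    (himp : ∀ b, cnfSat b G → cnfSat b F) : exSat X (F ∪ G) a ↔ exSat X G a := by
  simp only [exSat, cnfSat_union]
  exact exists_congr fun b => and_congr_right fun _ => and_iff_right_of_imp (himp b)

theorem stmt14_general (X Y : Set Var) (F1 F2 F1s : CNF)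
    (hdisj : Disjoint X Y)
    (hYonly : ∀ C ∈ F1s, ∀ l ∈ C, l.1 ∈ Y)
    (himp : ∀ a, cnfSat a (F1 ∪ F2) → cnfSat a F1s)
    (hred : equivQ X (F1s ∪ F1 ∪ F2) (F1s ∪ F2)) :
    ∀ a, (cnfSat a F1s ∧ exSat X F2 a) ↔ exSat X (F1 ∪ F2) a := by
  intro a
  have hfree : ∀ C ∈ F1s, ∀ l ∈ C, l.1 ∉ X :=
    fun C hC l hl => hdisj.notMem_of_mem_right (hYonly C hC l hl)
  calc cnfSat a F1s ∧ exSat X F2 a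
      ↔ exSat X (F1s ∪ F2) a := (exSat_union_of_forall_notMem hfree).symm
    _ ↔ exSat X (F1s ∪ (F1 ∪ F2)) a := by rw [← Set.union_assoc]; exact (hred a).symm
    _ ↔ exSat X (F1 ∪ F2) a := exSat_union_of_imp himp

/-- Solution criterion for PQE via redundancy: if every clause of `F₁` is an `X`-clause,
`F₁*` is over `Y` and implied by `F₁ ∧ F₂`, and the clauses of `F₁` are redundant in
`∃X.(F₁* ∧ F₁ ∧ F₂)`, then `F₁* ∧ ∃X.F₂ ≡ ∃X.(F₁ ∧ F₂)`. -/
theorem stmt14 (X Y : Set Var) (F1 F2 F1s : CNF)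
    (hdisj : Disjoint X Y)
    (hXcl : ∀ C ∈ F1, ∃ l ∈ C, l.1 ∈ X)
    (hYonly : ∀ C ∈ F1s, ∀ l ∈ C, l.1 ∈ Y)
    (himp : ∀ a, cnfSat a (F1 ∪ F2) → cnfSat a F1s)
    (hred : equivQ X (F1s ∪ F1 ∪ F2) (F1s ∪ F2)) :
    ∀ a, (cnfSat a F1s ∧ exSat X F2 a) ↔ exSat X (F1 ∪ F2) a :=
  stmt14_general X Y F1 F2 F1s hdisj hYonly himp hred
end

section
/- Correctness of PQE-based satisfiability in the circuit setting: let F(X,Y,Z) be a CNF formula, z a full assignment to Z, and C_z the longest clause falsified by z, i.e., the clause containing, for each variable of Z, the literal falsified by z. Let W = Y ∪ Z and suppose G(X) satisfies ∃W.(C_z ∧ F) ≡ G ∧ ∃W.F, and suppose ∃W.F ≡ true (for every assignment to X there exist assignments to Y,Z satisfying F). Suppose moreover that F is deterministic in the sense that for each assignment x to X there is exactly one (y,z') with (x,y,z') ⊨ F. Then for every assignment x to X: x falsifies G if and only if the unique z' with (x,y,z') ⊨ F equals z. -/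
/-- PQE-based circuit satisfiability: for a deterministic circuit encoding `F` with
`∃W.F ≡ ⊤` (`W = Y ∪ Z`) and `G` solving the PQE problem of taking the clause `C_z`
(the longest clause falsified by `z`) out of `∃W.(C_z ∧ F)`, an input assignment
falsifies `G` iff the circuit's (unique) output on it equals `z`. -/
theorem stmt16 (X Y Z : Set Var) (F G : CNF) (z : Assn)
    (hXY : Disjoint X Y) (hXZ : Disjoint X Z) (hYZ : Disjoint Y Z)
    (hFvars : ∀ D ∈ F, ∀ l ∈ D, l.1 ∈ X ∪ Y ∪ Z)
    (hGX : ∀ D ∈ G, ∀ l ∈ D, l.1 ∈ X)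
    (htotal : ∀ a, exSat (Y ∪ Z) F a)
    (hdet : ∀ a a', cnfSat a F → cnfSat a' F → (∀ v ∈ X, a v = a' v) →
        ∀ v ∈ Y ∪ Z, a v = a' v)
    (hpqe : ∀ a, exSat (Y ∪ Z) ({ {l : Lit | l.1 ∈ Z ∧ l.2 = !(z l.1)} } ∪ F) a ↔
        (cnfSat a G ∧ exSat (Y ∪ Z) F a)) :
    ∀ a, (¬ cnfSat a G) ↔
      ∃ a', (∀ v ∉ Y ∪ Z, a' v = a v) ∧ cnfSat a' F ∧ ∀ v ∈ Z, a' v = z v := by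
  intro a
  have hpq : exSat (Y ∪ Z) ({ {l : Lit | l.1 ∈ Z ∧ l.2 = !(z l.1)} } ∪ F) a ↔ cnfSat a G := by
    rw [hpqe a]; simp [htotal a]
  constructor
  · intro hG
    obtain ⟨a', ha'out, ha'F⟩ := htotal a
    refine ⟨a', ha'out, ha'F, ?_⟩
    by_contra hne
    push_neg at hne
    obtain ⟨v, hvZ, hv⟩ := hne
    apply hG
    rw [← hpq]
    refine ⟨a', ha'out, ?_⟩
    intro C hC
    rcases hC with hC | hC
    · refine ⟨(v, !(z v)), ?_, ?_⟩
      · simp at hC; subst hC; exact ⟨hvZ, rfl⟩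
      · simp only []
        cases h : a' v <;> cases h2 : z v <;> simp_all
    · exact ha'F C hC
  · rintro ⟨a', ha'out, ha'F, ha'z⟩ hG
    rw [← hpq] at hG
    obtain ⟨a'', ha''out, ha''sat⟩ := hG
    have ha''F : cnfSat a'' F := fun C hC => ha''sat C (Or.inr hC)
    obtain ⟨l, hl, hlv⟩ := ha''sat _ (Or.inl rfl)
    obtain ⟨hlZ, hlneg⟩ := hl
    have hX : ∀ v ∈ X, a' v = a'' v := by
      intro v hv
      have h1 : v ∉ Y ∪ Z := by
        intro h; rcases h with h | h
        · exact hXY.ne_of_mem hv h rfl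
        · exact hXZ.ne_of_mem hv h rfl
      rw [ha'out v h1, ha''out v h1]
    have := hdet a' a'' ha'F ha''F hX l.1 (Or.inr hlZ)
    rw [ha'z l.1 hlZ] at this
    rw [hlv, hlneg] at this
    simp at this
end

section
/- Reachability diameter criterion via clause redundancy: let T(S,S') be a transition relation and I(S) an initial-state predicate over state variables. For n ≥ 0, let G_{0,n+1} = T(S₀,S₁) ∧ ... ∧ T(S_n,S_{n+1}), W_n = S₀ ∪ ... ∪ S_n, I₀ = I(S₀), I₁ = I(S₁). If ∃W_n.(I₁ ∧ I₀ ∧ G_{0,n+1}) ≡ ∃W_n.(I₀ ∧ G_{0,n+1}), then every state reachable in n+1 transitions from an initial state is reachable in at most n transitions; consequently the reachability diameter is at most n. -/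
/-- State `s` is reachable in exactly `k` transitions from an initial state. -/
def reachIn {State : Type} (I : State → Prop) (T : State → State → Prop)
    (k : ℕ) (s : State) : Prop :=
  ∃ p : ℕ → State, I (p 0) ∧ (∀ i < k, T (p i) (p (i + 1))) ∧ p k = s

/-!
The equivalence says that whenever a state is reached in `n + 1` steps, some path of that
length reaching it also passes through an initial state after its first step; dropping that
first step reaches it in `n` steps. Writing `R_k` for the states reachable in exactly `k`
steps, `R_{k+1}` is the `T`-image of `R_k`, so the inclusion `R_{n+1} ⊆ R_n` propagates to
`R_{k+1} ⊆ R_k` for all `k ≥ n`, and every `R_k` with `k ≥ n` lies in `R_n`.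
-/

section Reachability

variable {State : Type} {I : State → Prop} {T : State → State → Prop}

theorem reachIn_succ_iff {k : ℕ} {s : State} :
    reachIn I T (k + 1) s ↔ ∃ t, reachIn I T k t ∧ T t s := by
  constructor
  · rintro ⟨p, h0, hT, rfl⟩
    exact ⟨p k, ⟨p, h0, fun i hi => hT i (by omega), rfl⟩, hT k k.lt_succ_self⟩
  · rintro ⟨t, ⟨q, h0, hT, rfl⟩, hts⟩
    refine ⟨fun i => if i ≤ k then q i else s, by simpa using h0, fun i hi => ?_, by simp⟩
    rcases Nat.lt_or_eq_of_le (Nat.le_of_lt_succ hi) with hik | rfl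
    · simpa [hik.le, Nat.succ_le_of_lt hik] using hT i hik
    · simpa using hts

theorem reachIn_of_initial_succ {k : ℕ} {p : ℕ → State} (h1 : I (p 1))
    (hT : ∀ i < k + 1, T (p i) (p (i + 1))) : reachIn I T k (p (k + 1)) :=
  ⟨fun i => p (i + 1), h1, fun i hi => hT (i + 1) (by omega), rfl⟩

theorem reachIn_succ_le_succ {k : ℕ} (h : reachIn I T (k + 1) ≤ reachIn I T k) :
    reachIn I T (k + 2) ≤ reachIn I T (k + 1) := fun s hs => by
  obtain ⟨t, ht, hts⟩ := reachIn_succ_iff.1 hs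
  exact reachIn_succ_iff.2 ⟨t, h t ht, hts⟩

theorem antitone_reachIn_add {n : ℕ} (h : reachIn I T (n + 1) ≤ reachIn I T n) :
    Antitone fun j => reachIn I T (n + j) := by
  refine antitone_nat_of_succ_le fun j => ?_
  induction j with
  | zero => exact h
  | succ j ih => exact reachIn_succ_le_succ ih

theorem reachIn_le_of_le {n k : ℕ} (h : reachIn I T (n + 1) ≤ reachIn I T n) (hk : n ≤ k) :
    reachIn I T k ≤ reachIn I T n := by
  simpa [Nat.add_sub_cancel' hk] using antitone_reachIn_add h (Nat.zero_le (k - n))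

end Reachability

theorem stmt18_general (State : Type) (I : State → Prop) (T : State → State → Prop) (n : ℕ)
    (hequiv : ∀ s : State,
      (∃ p : ℕ → State, I (p 0) ∧ I (p 1) ∧ (∀ i < n + 1, T (p i) (p (i + 1))) ∧
        p (n + 1) = s) ↔
      (∃ p : ℕ → State, I (p 0) ∧ (∀ i < n + 1, T (p i) (p (i + 1))) ∧
        p (n + 1) = s)) :
    (∀ s, reachIn I T (n + 1) s → ∃ k ≤ n, reachIn I T k s) ∧
    (∀ s k, reachIn I T k s → ∃ m ≤ n, reachIn I T m s) := by
  have hstep : reachIn I T (n + 1) ≤ reachIn I T n := fun s hs => by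
    obtain ⟨p, -, h1, hT, rfl⟩ := (hequiv s).2 hs
    exact reachIn_of_initial_succ h1 hT
  refine ⟨fun s hs => ⟨n, le_rfl, hstep s hs⟩, fun s k hs => ?_⟩
  rcases le_total k n with hkn | hnk
  · exact ⟨k, hkn, hs⟩
  · exact ⟨n, le_rfl, reachIn_le_of_le hstep hnk s hs⟩

/-- Reachability diameter criterion: if `∃Wₙ.(I₁ ∧ I₀ ∧ G) ≡ ∃Wₙ.(I₀ ∧ G)` as
formulas over the `(n+1)`-st state copy, then every state reachable in `n+1`
transitions is reachable in at most `n` transitions; consequently every reachable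
state is reachable in at most `n` transitions (the diameter is at most `n`). -/
theorem stmt18 (State : Type) (I : State → Prop) (T : State → State → Prop) (n : ℕ)
    (htotal : ∀ s, ∃ s', T s s')
    (hequiv : ∀ s : State,
      (∃ p : ℕ → State, I (p 0) ∧ I (p 1) ∧ (∀ i < n + 1, T (p i) (p (i + 1))) ∧
        p (n + 1) = s) ↔
      (∃ p : ℕ → State, I (p 0) ∧ (∀ i < n + 1, T (p i) (p (i + 1))) ∧
        p (n + 1) = s)) :
    (∀ s, reachIn I T (n + 1) s → ∃ k ≤ n, reachIn I T k s) ∧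
    (∀ s k, reachIn I T k s → ∃ m ≤ n, reachIn I T m s) :=
  stmt18_general State I T n hequiv
end
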